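/- Let B be a nonempty subset of (0,1) that is closed in ℝ and θ-invariant (B = θ(B)). Then B has Lebesgue measure zero. -/

import Mathlib

open Set MeasureTheory Filter

open Classical in
/-- The doubling map `θ` on `[0,1)`: `θ(ξ) = 2ξ` for `ξ < 1/2`, `2ξ − 1` otherwise. -/
noncomputable def theta (ξ : ℝ) : ℝ := if ξ < 1/2 then 2*ξ else 2*ξ - 1

open Classical in
/-- `ξ* = ξ + 1/2` for `ξ ∈ [0,1/2]` and `ξ − 1/2` for `ξ ∈ (1/2,1]`. -/
noncomputable def starR (ξ : ℝ) : ℝ := if ξ ≤ 1/2 then ξ + 1/2 else ξ - 1/2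

/-!
On the circle `ℝ/ℤ` the map `θ` becomes `x ↦ 2x`, which is ergodic. The image of `B` in the
circle is closed and forward invariant, hence null or conull; a closed conull set is the whole
circle, which would force `B` to contain an integer. So the image is null, and since the covering
map restricted to `(0,1]` preserves measure, `B` is null as well.
-/

namespace AddCircle

variable {T : ℝ} [Fact (0 < T)]

theorem eq_univ_or_volume_eq_zero_of_mapsTo_nsmul {C : Set (AddCircle T)} (hC : IsClosed C)
    {n : ℕ} (hn : 1 < n) (hmaps : MapsTo (n • ·) C C) : C = univ ∨ volume C = 0 := by
  rcases (ergodic_nsmul hn).ae_empty_or_univ_of_image_ae_le hC.measurableSet.nullMeasurableSet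
    hmaps.image_subset.eventuallyLE with hnull | hconull
  · exact .inr (by simpa using hnull)
  · left
    have : volume Cᶜ = 0 := by simpa using ae_eq_univ.1 hconull
    simpa using hC.isOpen_compl.measure_eq_zero_iff volume |>.1 this

theorem volume_le_volume_image_coe {s : Set ℝ} {t : ℝ} (hs : s ⊆ Ioc t (t + T)) :
    volume s ≤ volume ((↑) '' s : Set (AddCircle T)) :=
  calc volume s = volume.restrict (Ioc t (t + T)) s := (Measure.restrict_eq_self _ hs).symm
    _ ≤ volume.restrict (Ioc t (t + T)) ((↑) ⁻¹' ((↑) '' s : Set (AddCircle T))) :=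
        measure_mono (subset_preimage_image _ _)
    _ ≤ volume ((↑) '' s : Set (AddCircle T)) := by
        simpa only [(AddCircle.measurePreserving_mk T t).map_eq] using
          Measure.le_map_apply (AddCircle.measurePreserving_mk T t).aemeasurable _

end AddCircle

theorem coe_theta (ξ : ℝ) : (theta ξ : UnitAddCircle) = 2 • (ξ : UnitAddCircle) := by
  rw [← AddCircle.coe_nsmul, nsmul_eq_mul, Nat.cast_ofNat]
  unfold theta
  split_ifs
  · rfl
  · rw [AddCircle.coe_sub, AddCircle.coe_period, sub_zero]

theorem measure_zero_of_theta_invariant_general (B : Set ℝ)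
    (hB : B ⊆ Set.Ioo 0 1) (hcl : IsClosed B) (hinv : B = theta '' B) :
    volume B = 0 := by
  set C : Set UnitAddCircle := (↑) '' B
  have hC : IsClosed C :=
    ((Metric.isCompact_of_isClosed_isBounded hcl (Metric.isBounded_Ioo 0 1 |>.subset hB)).image
      (AddCircle.continuous_mk' 1)).isClosed
  have hmaps : MapsTo (2 • ·) C C := by
    rintro _ ⟨x, hx, rfl⟩
    refine ⟨theta x, ?_, coe_theta x⟩
    rw [hinv]
    exact mem_image_of_mem _ hx
  rcases AddCircle.eq_univ_or_volume_eq_zero_of_mapsTo_nsmul hC one_lt_two hmaps with huniv | hnull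
  · obtain ⟨x, hx, hx0⟩ : (0 : UnitAddCircle) ∈ C := huniv ▸ mem_univ _
    exact (hB hx).1.ne'
      ((AddCircle.coe_eq_zero_iff_of_mem_Ico (Ioo_subset_Ico_self (hB hx))).1 hx0) |>.elim
  · refine le_antisymm (hnull ▸ AddCircle.volume_le_volume_image_coe (t := 0) ?_) bot_le
    rw [zero_add]
    exact hB.trans Ioo_subset_Ioc_self

/-- A nonempty, closed, `θ`-invariant `B ⊂ (0,1)` has Lebesgue measure zero. -/
theorem measure_zero_of_theta_invariant (B : Set ℝ) (hne : B.Nonempty)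
    (hB : B ⊆ Set.Ioo 0 1) (hcl : IsClosed B) (hinv : B = theta '' B) :
    volume B = 0 :=
  measure_zero_of_theta_invariant_general B hB hcl hinv
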